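/- arXiv:1603.06966 — 2 statements merged into one kernel-verified Lean document; each statement's English description precedes it below -/
import Mathlib

section
/- Under the Lipschitz-exact approximation hypotheses, for Lebesgue-almost every x ∈ U the map ι = (Q,P) is differentiable at x and for all u, v ∈ ℝⁿ one has ⟨DQ(x)u, DP(x)v⟩ − ⟨DQ(x)v, DP(x)u⟩ = 0; that is, the almost-everywhere defined pullback ι*ω of the canonical symplectic form vanishes almost everywhere. -/
/-!
Fix `x` where `Q` and `P` are differentiable, with derivatives `T` and `M`, and let `A = c + T ·`
be the affine approximation of `Q` at `x`. Exactness `⟪Pₖ, dQₖ⟫ = dSₖ` makes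
`ψₖ = ⟪Pₖ, Qₖ - A⟫ - Sₖ` a primitive of `⟪dPₖ ·, Qₖ - A⟫ - ⟪Pₖ, T ·⟫`, in which only the
derivative of `Pₖ` appears, and that is bounded by `K`. Around the parallelogram spanned by small
`u, v` at `x` the increments of `ψₖ` cancel, so by the mean value inequality the circulation of
`⟪Pₖ, T ·⟫` is small once `Qₖ` and `Pₖ` are uniformly close to the affine approximations of `Q` and
`P`. The circulation of the affine approximation of `P` is exactly `⟪T v, M u⟫ - ⟪T u, M v⟫`;
letting `k → ∞` shows that this bilinear form is `o(‖(u, v)‖²)`, hence zero. Rademacher's theorem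
provides differentiability almost everywhere, since the uniform limit `(Q, P)` of the `K`-Lipschitz
maps `(Qₖ, Pₖ)` is `K`-Lipschitz.
-/

open scoped RealInnerProductSpace NNReal
open MeasureTheory Filter Set Asymptotics Topology Metric

section

variable {E F : Type*} [NormedAddCommGroup E] [NormedSpace ℝ E]
  [NormedAddCommGroup F] [InnerProductSpace ℝ F]

theorem eq_zero_of_isLittleO_norm_sq {G : Type*} [NormedAddCommGroup G] [NormedSpace ℝ G]
    {q : E → G} (hq : ∀ (t : ℝ) (p : E), q (t • p) = t ^ 2 • q p)
    (ho : q =o[𝓝 0] fun p => ‖p‖ ^ 2) (p : E) : q p = 0 := by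
  have hline : Tendsto (fun t : ℝ => t • p) (𝓝[≠] 0) (𝓝 0) :=
    ((continuous_id.smul continuous_const).tendsto' 0 0 (zero_smul ℝ p)).mono_left
      nhdsWithin_le_nhds
  refine (isLittleO_const_const_iff (l := 𝓝[≠] (0 : ℝ)) (c := ‖p‖ ^ 2)).mp
    (isLittleO_iff.2 fun c hc => ?_)
  filter_upwards [isLittleO_iff.1 (ho.comp_tendsto hline) hc, self_mem_nhdsWithin]
    with t ht (ht0 : t ≠ 0)
  simp only [Function.comp_apply, hq, norm_smul, norm_mul, norm_pow, norm_norm, mul_pow] at ht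
  rw [norm_pow, norm_norm]
  have : 0 < ‖t‖ ^ 2 := by positivity
  nlinarith

theorem DifferentiableAt.hasDerivAt_comp_add_smul {f : E → F} {a w : E} {t : ℝ}
    (hf : DifferentiableAt ℝ f (a + t • w)) :
    HasDerivAt (fun s : ℝ => f (a + s • w)) (fderiv ℝ f (a + t • w) w) t := by
  have : HasDerivAt (fun s : ℝ => a + s • w) w t := by
    simpa using ((hasDerivAt_id t).smul_const w).const_add a
  exact hf.hasFDerivAt.comp_hasDerivAt t this

/-- `∫₀¹ ⟪d + M (a + t • w), T w⟫ dt`, the integral of the affine 1-form `⟪d + M ·, T ·⟫`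
along the segment from `a` to `a + w`. -/
noncomputable def affineFormIntegral (d : F) (T M : E →L[ℝ] F) (a w : E) : ℝ :=
  ⟪d + M a, T w⟫ + ⟪M w, T w⟫ / 2

theorem affineFormIntegral_parallelogram (d : F) (T M : E →L[ℝ] F) (x u v : E) :
    affineFormIntegral d T M x u + affineFormIntegral d T M (x + u) v
      + affineFormIntegral d T M (x + u + v) (-u) + affineFormIntegral d T M (x + v) (-v)
      = ⟪T v, M u⟫ - ⟪T u, M v⟫ := by
  simp only [affineFormIntegral, map_add, map_neg, inner_add_right,
    inner_neg_right, real_inner_comm (T _)]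
  ring

def correctedPrimitive (f g : E → F) (s : E → ℝ) (c : F) (T : E →L[ℝ] F) (y : E) : ℝ :=
  ⟪g y, f y - (c + T y)⟫ - s y

theorem hasDerivAt_correctedPrimitive_comp_add_smul {f g : E → F} {s : E → ℝ} {c : F}
    {T : E →L[ℝ] F} {a w : E} {t : ℝ} (hf : DifferentiableAt ℝ f (a + t • w))
    (hg : DifferentiableAt ℝ g (a + t • w)) (hs : DifferentiableAt ℝ s (a + t • w))
    (hexact : ∀ v, fderiv ℝ s (a + t • w) v = ⟪g (a + t • w), fderiv ℝ f (a + t • w) v⟫) :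
    HasDerivAt (fun r : ℝ => correctedPrimitive f g s c T (a + r • w))
      (⟪fderiv ℝ g (a + t • w) w, f (a + t • w) - (c + T (a + t • w))⟫
        - ⟪g (a + t • w), T w⟫) t := by
  have hA := (T.differentiableAt (x := a + t • w)).hasDerivAt_comp_add_smul.const_add c
  have := (hg.hasDerivAt_comp_add_smul.inner ℝ (hf.hasDerivAt_comp_add_smul.sub hA)).sub
    hs.hasDerivAt_comp_add_smul
  refine this.congr_deriv ?_
  rw [hexact, inner_sub_right, T.fderiv]
  simp only [Pi.sub_apply]
  ring

theorem abs_correctedPrimitive_sub_add_affineFormIntegral_le {f g : E → F} {s : E → ℝ}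
    {c d : F} {T M : E →L[ℝ] F} {B : Set E} {a w : E} {K ρ : ℝ} (hB : Convex ℝ B)
    (ha : a ∈ B) (haw : a + w ∈ B)
    (hf : ∀ y ∈ B, DifferentiableAt ℝ f y)
    (hg : ∀ y ∈ B, DifferentiableAt ℝ g y)
    (hs : ∀ y ∈ B, DifferentiableAt ℝ s y)
    (hexact : ∀ y ∈ B, ∀ v, fderiv ℝ s y v = ⟪g y, fderiv ℝ f y v⟫)
    (hg' : ∀ y ∈ B, ‖fderiv ℝ g y‖ ≤ K)
    (hfρ : ∀ y ∈ B, ‖f y - (c + T y)‖ ≤ ρ)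
    (hgρ : ∀ y ∈ B, ‖g y - (d + M y)‖ ≤ ρ) :
    |correctedPrimitive f g s c T (a + w) - correctedPrimitive f g s c T a
      + affineFormIntegral d T M a w| ≤ (K + ‖T‖) * ‖w‖ * ρ := by
  have hmem : ∀ t ∈ Icc (0 : ℝ) 1, a + t • w ∈ B := fun t => hB.add_smul_mem ha haw
  have hmodel : ∀ t : ℝ, HasDerivAt (fun r : ℝ => r * ⟪d + M a, T w⟫ + r ^ 2 / 2 * ⟪M w, T w⟫)
      ⟪d + M (a + t • w), T w⟫ t := by
    intro t
    refine ((hasDerivAt_mul_const _).add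
      (((hasDerivAt_pow 2 t).div_const 2).mul_const _)).congr_deriv ?_
    simp only [map_add, map_smul, inner_add_left, inner_smul_left, RCLike.conj_to_real]
    norm_num
    ring
  have hderiv : ∀ t ∈ Icc (0 : ℝ) 1, HasDerivAt
      (fun r : ℝ => correctedPrimitive f g s c T (a + r • w)
        + (r * ⟪d + M a, T w⟫ + r ^ 2 / 2 * ⟪M w, T w⟫))
      (⟪fderiv ℝ g (a + t • w) w, f (a + t • w) - (c + T (a + t • w))⟫
        - ⟪g (a + t • w) - (d + M (a + t • w)), T w⟫) t := by
    intro t ht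
    have hy := hmem t ht
    refine ((hasDerivAt_correctedPrimitive_comp_add_smul (hf _ hy) (hg _ hy) (hs _ hy)
      (hexact _ hy)).add (hmodel t)).congr_deriv ?_
    rw [inner_sub_left]
    ring
  have hbound : ∀ t ∈ Ico (0 : ℝ) 1,
      ‖⟪fderiv ℝ g (a + t • w) w, f (a + t • w) - (c + T (a + t • w))⟫
        - ⟪g (a + t • w) - (d + M (a + t • w)), T w⟫‖ ≤ (K + ‖T‖) * ‖w‖ * ρ := by
    intro t ht
    have hy := hmem t (Ico_subset_Icc_self ht)
    have hK : 0 ≤ K := (norm_nonneg _).trans (hg' _ hy)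
    have hρ : 0 ≤ ρ := (norm_nonneg _).trans (hfρ _ hy)
    calc _ ≤ ‖fderiv ℝ g (a + t • w) w‖ * ‖f (a + t • w) - (c + T (a + t • w))‖
          + ‖g (a + t • w) - (d + M (a + t • w))‖ * ‖T w‖ :=
          (norm_sub_le _ _).trans (add_le_add (norm_inner_le_norm _ _) (norm_inner_le_norm _ _))
      _ ≤ K * ‖w‖ * ρ + ρ * (‖T‖ * ‖w‖) := by
          gcongr
          exacts [(fderiv ℝ g _).le_of_opNorm_le (hg' _ hy) w, hfρ _ hy, hgρ _ hy, T.le_opNorm w]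
      _ = (K + ‖T‖) * ‖w‖ * ρ := by ring
  have := norm_image_sub_le_of_norm_deriv_le_segment_01'
    (fun t ht => (hderiv t ht).hasDerivWithinAt) hbound
  refine le_of_eq_of_le ?_ this
  rw [Real.norm_eq_abs, one_smul, zero_smul, add_zero, affineFormIntegral]
  ring_nf

theorem abs_inner_antisymm_le_of_exact {f g : E → F} {s : E → ℝ} {B : Set E} (hB : Convex ℝ B)
    (hf : ∀ y ∈ B, DifferentiableAt ℝ f y) (hg : ∀ y ∈ B, DifferentiableAt ℝ g y)
    (hs : ∀ y ∈ B, DifferentiableAt ℝ s y)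
    (hexact : ∀ y ∈ B, ∀ v, fderiv ℝ s y v = ⟪g y, fderiv ℝ f y v⟫)
    {K : ℝ} (hg' : ∀ y ∈ B, ‖fderiv ℝ g y‖ ≤ K) {c d : F} {T M : E →L[ℝ] F} {ρ : ℝ}
    (hfρ : ∀ y ∈ B, ‖f y - (c + T y)‖ ≤ ρ) (hgρ : ∀ y ∈ B, ‖g y - (d + M y)‖ ≤ ρ)
    {x u v : E} (hx : x ∈ B) (hxu : x + u ∈ B) (hxuv : x + u + v ∈ B) (hxv : x + v ∈ B)
    {r : ℝ} (hu : ‖u‖ ≤ r) (hv : ‖v‖ ≤ r) :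
    |⟪T u, M v⟫ - ⟪T v, M u⟫| ≤ 4 * ((K + ‖T‖) * r * ρ) := by
  have hK : 0 ≤ K := (norm_nonneg _).trans (hg' x hx)
  have hρ : 0 ≤ ρ := (norm_nonneg _).trans (hfρ x hx)
  have side : ∀ a w, a ∈ B → a + w ∈ B → ‖w‖ ≤ r →
      |correctedPrimitive f g s c T (a + w) - correctedPrimitive f g s c T a
        + affineFormIntegral d T M a w| ≤ (K + ‖T‖) * r * ρ := fun a w ha haw hw =>
    (abs_correctedPrimitive_sub_add_affineFormIntegral_le hB ha haw hf hg hs hexact hg' hfρ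
      hgρ).trans (by gcongr)
  have hvu : x + u + v + -u = x + v := by abel
  have h₁ := abs_le.1 (side x u hx hxu hu)
  have h₂ := abs_le.1 (side (x + u) v hxu hxuv hv)
  have h₃ := abs_le.1 (side (x + u + v) (-u) hxuv (hvu ▸ hxv) ((norm_neg u).trans_le hu))
  have h₄ := abs_le.1 (side (x + v) (-v) hxv ((add_neg_cancel_right x v).symm ▸ hx)
    ((norm_neg v).trans_le hv))
  rw [hvu] at h₃
  rw [add_neg_cancel_right] at h₄
  have := affineFormIntegral_parallelogram d T M x u v
  exact abs_le.2 ⟨by linarith, by linarith⟩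

theorem abs_inner_antisymm_le_of_tendstoUniformlyOn {U B : Set E} (hU : IsOpen U) (hBU : B ⊆ U)
    (hB : Convex ℝ B) {K : ℝ≥0} {Q P : E → F} {Qk Pk : ℕ → E → F} {Sk : ℕ → E → ℝ}
    (hQk : ∀ k, DifferentiableOn ℝ (Qk k) U) (hPk : ∀ k, DifferentiableOn ℝ (Pk k) U)
    (hSk : ∀ k, DifferentiableOn ℝ (Sk k) U) (hPkLip : ∀ k, LipschitzOnWith K (Pk k) U)
    (hexact : ∀ k, ∀ y ∈ U, ∀ v, fderiv ℝ (Sk k) y v = ⟪Pk k y, fderiv ℝ (Qk k) y v⟫)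
    (hQconv : TendstoUniformlyOn Qk Q atTop U) (hPconv : TendstoUniformlyOn Pk P atTop U)
    {c d : F} {T M : E →L[ℝ] F} {ρ : ℝ}
    (hQρ : ∀ y ∈ B, ‖Q y - (c + T y)‖ ≤ ρ) (hPρ : ∀ y ∈ B, ‖P y - (d + M y)‖ ≤ ρ)
    {x u v : E} (hx : x ∈ B) (hxu : x + u ∈ B) (hxuv : x + u + v ∈ B) (hxv : x + v ∈ B)
    {r : ℝ} (hu : ‖u‖ ≤ r) (hv : ‖v‖ ≤ r) :
    |⟪T u, M v⟫ - ⟪T v, M u⟫| ≤ 4 * ((K + ‖T‖) * r * ρ) := by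
  have hnhds : ∀ y ∈ B, U ∈ 𝓝 y := fun y hy => hU.mem_nhds (hBU hy)
  have hη : ∀ η > 0, |⟪T u, M v⟫ - ⟪T v, M u⟫| ≤ 4 * ((K + ‖T‖) * r * (η + ρ)) := by
    intro η hη
    obtain ⟨k, hQη, hPη⟩ := ((Metric.tendstoUniformlyOn_iff.1 hQconv η hη).and
      (Metric.tendstoUniformlyOn_iff.1 hPconv η hη)).exists
    have close : ∀ {R R' e : E → F}, (∀ y ∈ U, dist (R y) (R' y) < η) →
        (∀ y ∈ B, ‖R y - e y‖ ≤ ρ) → ∀ y ∈ B, ‖R' y - e y‖ ≤ η + ρ := fun hR he y hy =>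
      (norm_sub_le_norm_sub_add_norm_sub _ _ _).trans
        (add_le_add (by rw [← dist_eq_norm, dist_comm]; exact (hR y (hBU hy)).le) (he y hy))
    exact abs_inner_antisymm_le_of_exact hB
      (fun y hy => (hQk k).differentiableAt (hnhds y hy))
      (fun y hy => (hPk k).differentiableAt (hnhds y hy))
      (fun y hy => (hSk k).differentiableAt (hnhds y hy)) (fun y hy => hexact k y (hBU hy))
      (fun y hy => ((hPk k).differentiableAt (hnhds y hy)).hasFDerivAt.le_of_lipschitzOn
        (hnhds y hy) (hPkLip k))
      (close hQη hQρ) (close hPη hPρ) hx hxu hxuv hxv hu hv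
  have hlim : Tendsto (fun η => 4 * ((K + ‖T‖) * r * (η + ρ))) (𝓝[>] 0)
      (𝓝 (4 * ((K + ‖T‖) * r * (0 + ρ)))) :=
    (Continuous.tendsto (by fun_prop) 0).mono_left nhdsWithin_le_nhds
  simpa using ge_of_tendsto hlim (eventually_nhdsWithin_of_forall hη)

theorem inner_antisymm_eq_zero_of_tendstoUniformlyOn {U : Set E} (hU : IsOpen U) {K : ℝ≥0}
    {Q P : E → F} {Qk Pk : ℕ → E → F} {Sk : ℕ → E → ℝ}
    (hQk : ∀ k, DifferentiableOn ℝ (Qk k) U) (hPk : ∀ k, DifferentiableOn ℝ (Pk k) U)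
    (hSk : ∀ k, DifferentiableOn ℝ (Sk k) U) (hPkLip : ∀ k, LipschitzOnWith K (Pk k) U)
    (hexact : ∀ k, ∀ y ∈ U, ∀ v, fderiv ℝ (Sk k) y v = ⟪Pk k y, fderiv ℝ (Qk k) y v⟫)
    (hQconv : TendstoUniformlyOn Qk Q atTop U) (hPconv : TendstoUniformlyOn Pk P atTop U)
    {x : E} (hx : x ∈ U) {T M : E →L[ℝ] F} (hQ : HasFDerivAt Q T x) (hP : HasFDerivAt P M x)
    (u v : E) : ⟪T u, M v⟫ - ⟪T v, M u⟫ = 0 := by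
  refine eq_zero_of_isLittleO_norm_sq (q := fun p : E × E => ⟪T p.1, M p.2⟫ - ⟪T p.2, M p.1⟫)
    (fun t p => ?_) ?_ (u, v)
  · simp only [Prod.smul_fst, Prod.smul_snd, map_smul, real_inner_smul_left,
      real_inner_smul_right, smul_eq_mul]
    ring
  refine IsLittleO.of_const_mul_right (c := 8 * ((K : ℝ) + ‖T‖ + 1))
    (isLittleO_iff.2 fun θ hθ => ?_)
  obtain ⟨R, hR, hball⟩ := Metric.mem_nhds_iff.1
    ((hQ.isLittleO.def hθ).and ((hP.isLittleO.def hθ).and (hU.mem_nhds hx)))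
  filter_upwards [Metric.ball_mem_nhds (0 : E × E) (half_pos hR)] with p hp
  set r := ‖p‖
  have hrR : 2 * r < R := by rw [mem_ball_zero_iff] at hp; linarith
  have hsub : closedBall x (2 * r) ⊆ ball x R := Metric.closedBall_subset_ball hrR
  have hmodel : ∀ {f : E → F} {L : E →L[ℝ] F},
      (∀ y ∈ ball x R, ‖f y - f x - L (y - x)‖ ≤ θ * ‖y - x‖) →
        ∀ y ∈ closedBall x (2 * r), ‖f y - (f x - L x + L y)‖ ≤ θ * (2 * r) := by
    intro f L hf y hy
    rw [show f y - (f x - L x + L y) = f y - f x - L (y - x) by rw [map_sub]; abel]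
    exact (hf y (hsub hy)).trans (by gcongr; rwa [← dist_eq_norm])
  have hmem : ∀ w : E, ‖w‖ ≤ 2 * r → x + w ∈ closedBall x (2 * r) := fun w hw => by
    rwa [mem_closedBall_iff_norm, add_sub_cancel_left]
  have hr : 0 ≤ r := norm_nonneg p
  have h₁ : ‖p.1‖ ≤ r := norm_fst_le p
  have h₂ : ‖p.2‖ ≤ r := norm_snd_le p
  have hω := abs_inner_antisymm_le_of_tendstoUniformlyOn hU
    (hsub.trans fun y hy => (hball hy).2.2) (convex_closedBall x _) hQk hPk hSk hPkLip hexact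
    hQconv hPconv (hmodel fun y hy => (hball hy).1) (hmodel fun y hy => (hball hy).2.1)
    (mem_closedBall_self (by linarith)) (hmem p.1 (by linarith))
    ((add_assoc x p.1 p.2).symm ▸ hmem _ ((norm_add_le _ _).trans (by linarith)))
    (hmem p.2 (by linarith)) h₁ h₂
  have hC : 0 < 8 * ((K : ℝ) + ‖T‖ + 1) := by positivity
  simp only [Real.norm_eq_abs, abs_mul, abs_pow, abs_of_pos hC, abs_of_nonneg hr]
  nlinarith [mul_nonneg hθ.le (sq_nonneg r)]

end

theorem LipschitzOnWith.of_tendsto {α β ι : Type*} [PseudoEMetricSpace α] [PseudoEMetricSpace β]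
    {l : Filter ι} [l.NeBot] {K : ℝ≥0} {s : Set α} {F : ι → α → β} {f : α → β}
    (hF : ∀ᶠ i in l, LipschitzOnWith K (F i) s)
    (hlim : ∀ x ∈ s, Tendsto (fun i => F i x) l (𝓝 (f x))) : LipschitzOnWith K f s :=
  fun _ hx _ hy => le_of_tendsto ((hlim _ hx).edist (hlim _ hy)) (hF.mono fun _ hi => hi hx hy)

theorem lipschitz_exact_brane_isotropic_ae_general (n : ℕ) (U : Set (EuclideanSpace ℝ (Fin n)))
    (hU : IsOpen U) (K : ℝ≥0)
    (Q P : EuclideanSpace ℝ (Fin n) → EuclideanSpace ℝ (Fin n))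
    (Qk Pk : ℕ → EuclideanSpace ℝ (Fin n) → EuclideanSpace ℝ (Fin n))
    (Sk : ℕ → EuclideanSpace ℝ (Fin n) → ℝ)
    (hC1 : ∀ k, ContDiffOn ℝ 1 (fun x => (Qk k x, Pk k x)) U)
    (hS1 : ∀ k, ContDiffOn ℝ 1 (Sk k) U)
    (hιLip : ∀ k, LipschitzOnWith K (fun x => (Qk k x, Pk k x)) U)
    (hexact : ∀ k, ∀ x ∈ U, ∀ v,
      fderiv ℝ (Sk k) x v = ⟪Pk k x, fderiv ℝ (Qk k) x v⟫)
    (hιconv : TendstoUniformlyOn (fun k x => (Qk k x, Pk k x)) (fun x => (Q x, P x)) atTop U) :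
    ∀ᵐ x ∂volume, x ∈ U →
      DifferentiableAt ℝ Q x ∧ DifferentiableAt ℝ P x ∧
        ∀ u v, ⟪fderiv ℝ Q x u, fderiv ℝ P x v⟫ - ⟪fderiv ℝ Q x v, fderiv ℝ P x u⟫ = 0 := by
  have hι : ∀ k, DifferentiableOn ℝ (fun x => (Qk k x, Pk k x)) U :=
    fun k => (hC1 k).differentiableOn one_ne_zero
  have hPkLip : ∀ k, LipschitzOnWith K (Pk k) U := fun k => by
    simpa [Function.comp_def] using LipschitzWith.prod_snd.comp_lipschitzOnWith (hιLip k)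
  have hQPLip : LipschitzOnWith K (fun x => (Q x, P x)) U :=
    .of_tendsto (.of_forall hιLip) fun _ hx => hιconv.tendsto_at hx
  filter_upwards [hQPLip.ae_differentiableWithinAt_of_mem] with x hx hxU
  have hQP := (hx hxU).differentiableAt (hU.mem_nhds hxU)
  exact ⟨hQP.fst, hQP.snd, inner_antisymm_eq_zero_of_tendstoUniformlyOn hU (fun k => (hι k).fst)
    (fun k => (hι k).snd) (fun k => (hS1 k).differentiableOn one_ne_zero) hPkLip hexact
    (uniformContinuous_fst.comp_tendstoUniformlyOn hιconv)
    (uniformContinuous_snd.comp_tendstoUniformlyOn hιconv) hxU hQP.fst.hasFDerivAt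
    hQP.snd.hasFDerivAt⟩

/-- For a Lipschitz-exact Lagrangian brane, the almost-everywhere defined
pullback `ι*ω` of the canonical symplectic form
`ω((a₁,b₁),(a₂,b₂)) = ⟪a₁,b₂⟫ - ⟪a₂,b₁⟫` vanishes almost everywhere on `U`. -/
theorem lipschitz_exact_brane_isotropic_ae (n : ℕ) (U : Set (EuclideanSpace ℝ (Fin n)))
    (hU : IsOpen U) (K : ℝ≥0) (hK : 0 < K)
    (Q P : EuclideanSpace ℝ (Fin n) → EuclideanSpace ℝ (Fin n))
    (S : EuclideanSpace ℝ (Fin n) → ℝ)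
    (Qk Pk : ℕ → EuclideanSpace ℝ (Fin n) → EuclideanSpace ℝ (Fin n))
    (Sk : ℕ → EuclideanSpace ℝ (Fin n) → ℝ)
    (hC1 : ∀ k, ContDiffOn ℝ 1 (fun x => (Qk k x, Pk k x)) U)
    (hS1 : ∀ k, ContDiffOn ℝ 1 (Sk k) U)
    (hιLip : ∀ k, LipschitzOnWith K (fun x => (Qk k x, Pk k x)) U)
    (hSLip : ∀ k, LipschitzOnWith K (Sk k) U)
    (hexact : ∀ k, ∀ x ∈ U, ∀ v,
      fderiv ℝ (Sk k) x v = ⟪Pk k x, fderiv ℝ (Qk k) x v⟫)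
    (hιconv : TendstoUniformlyOn (fun k x => (Qk k x, Pk k x)) (fun x => (Q x, P x)) atTop U)
    (hSconv : TendstoUniformlyOn Sk S atTop U) :
    ∀ᵐ x ∂volume, x ∈ U →
      DifferentiableAt ℝ Q x ∧ DifferentiableAt ℝ P x ∧
        ∀ u v, ⟪fderiv ℝ Q x u, fderiv ℝ P x v⟫ - ⟪fderiv ℝ Q x v, fderiv ℝ P x u⟫ = 0 :=
  lipschitz_exact_brane_isotropic_ae_general n U hU K Q P Qk Pk Sk hC1 hS1 hιLip hexact hιconv
end

section
/- Let C > 0, let L ⊆ ℝⁿ × ℝⁿ and h : ℝⁿ × ℝⁿ → ℝ, and let L_k ⊆ ℝⁿ × ℝⁿ be a sequence of sets with functions h_k : ℝⁿ × ℝⁿ → ℝ. Let f_k : ℝⁿ → ℝ be a sequence of C-Lipschitz functions converging uniformly to f : ℝⁿ → ℝ, and let V ⊆ ℝⁿ be a set with Lebesgue-null complement such that for every k and every q ∈ V: f_k is differentiable at q, (q, ∇f_k(q)) ∈ L_k, and f_k(q) = h_k(q, ∇f_k(q)). Assume the following closure property: whenever (k_j) is a strictly increasing sequence of indices and x_j ∈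 L_{k_j} is a sequence converging to a point x ∈ ℝⁿ × ℝⁿ, then x ∈ L and h_{k_j}(x_j) → h(x). For q ∈ ℝⁿ write L_q := {p ∈ ℝⁿ : (q,p) ∈ L}. Then f is C-Lipschitz and: (a) at every point q where f is differentiable, ∇f(q) lies in the convex hull of L_q; (b) if moreover ∇f(q) is an extreme point of the convex hull of L_q, then f(q) = h(q, ∇f(q)). -/
/-!
Let `K` be the set of limits of `∇ f_k x` as `k → ∞` and `x → q` inside `V`; it is compact and,
by the closure property, contained in the fibre `L_q`. If `∇ f q` were not in `conv K`, some
`⟪v, ·⟫` would separate them, so that `⟪v, ∇ f_k⟫ ≤ c` near `q` for large `k`. On almost every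
line in direction `v` this integrates (fundamental theorem of calculus for Lipschitz functions) to
`f_k (x + t • v) - f_k x ≤ c * t`; the bound passes to the limit `f`, then by continuity to the
line through `q`, and forces `⟪v, ∇ f q⟫ ≤ c`. An extreme point of `conv L_q` that lies in
`conv K` is an extreme point of `conv K`, hence lies in `K`, and is then the limit of gradients
`∇ f_k x` at which `f_k x = h_k (x, ∇ f_k x)`, which gives `f q = h (q, ∇ f q)`.
-/

open scoped NNReal
open MeasureTheory Filter Set Topology Metric

theorem lipschitzWith_of_tendsto {ι α β : Type*} [PseudoEMetricSpace α] [PseudoEMetricSpace β]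
    {l : Filter ι} [l.NeBot] {F : ι → α → β} {f : α → β} {K : ℝ≥0}
    (hF : ∀ᶠ i in l, LipschitzWith K (F i)) (hFf : ∀ x, Tendsto (fun i => F i x) l (𝓝 (f x))) :
    LipschitzWith K f :=
  (isClosed_setOfPred_lipschitzWith K).mem_of_tendsto (tendsto_pi_nhds.2 hFf) hF

theorem isCompact_convexHull {E : Type*} [NormedAddCommGroup E] [NormedSpace ℝ E]
    [FiniteDimensional ℝ E] {K : Set E} (hK : IsCompact K) : IsCompact (convexHull ℝ K) := by
  let S (m : ℕ) : Set E := (fun wz : (Fin m → ℝ) × (Fin m → E) => ∑ i, wz.1 i • wz.2 i) ''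
    (stdSimplex ℝ (Fin m) ×ˢ univ.pi fun _ => K)
  have hS : convexHull ℝ K = ⋃ m ∈ Iic (Module.finrank ℝ E + 1), S m := by
    refine subset_antisymm (fun x hx => ?_) (iUnion₂_subset fun m _ => ?_)
    · obtain ⟨ι, _, z, w, hzK, hz, hw0, hw1, rfl⟩ := eq_pos_convex_span_of_mem_convexHull hx
      let e := Fintype.equivFin ι
      refine mem_biUnion (x := Fintype.card ι)
        (hz.card_le_finrank_succ.trans (by simpa using Submodule.finrank_le _)) ?_
      refine ⟨(w ∘ e.symm, z ∘ e.symm), ⟨⟨fun i => (hw0 _).le, ?_⟩, fun i _ => hzK ⟨_, rfl⟩⟩, ?_⟩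
      · simpa using (e.symm.sum_comp w).trans hw1
      · exact e.symm.sum_comp fun i => w i • z i
    · rintro _ ⟨⟨w, z⟩, ⟨⟨hw0, hw1⟩, hz⟩, rfl⟩
      exact mem_convexHull_of_exists_fintype w z hw0 hw1 (fun i => hz i (mem_univ i)) rfl
  rw [hS]
  exact (finite_Iic _).isCompact_biUnion fun m _ =>
    ((isCompact_stdSimplex ℝ (Fin m)).prod (isCompact_univ_pi fun _ => hK)).image (by fun_prop)

theorem AbsolutelyContinuousOnInterval.sub_le_mul_of_ae_deriv_le {g : ℝ → ℝ} {a b c : ℝ}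
    (hg : AbsolutelyContinuousOnInterval g a b) (hab : a ≤ b)
    (h : ∀ᵐ s ∂volume.restrict (Icc a b), deriv g s ≤ c) : g b - g a ≤ c * (b - a) :=
  calc g b - g a = ∫ s in a..b, deriv g s := hg.integral_deriv_eq_sub.symm
    _ ≤ ∫ _ in a..b, c :=
      intervalIntegral.integral_mono_ae_restrict hab hg.intervalIntegrable_deriv
        intervalIntegrable_const h
    _ = c * (b - a) := by rw [intervalIntegral.integral_const, smul_eq_mul, mul_comm]

section Lines

variable {E : Type*} [NormedAddCommGroup E] [NormedSpace ℝ E]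

theorem LipschitzWith.sub_le_mul_of_ae_fderiv_le {K : ℝ≥0} {g : E → ℝ} (hg : LipschitzWith K g)
    {x v : E} {c t : ℝ} (ht : 0 ≤ t)
    (h : ∀ᵐ s ∂volume.restrict (Icc 0 t),
      DifferentiableAt ℝ g (x + s • v) ∧ fderiv ℝ g (x + s • v) v ≤ c) :
    g (x + t • v) - g x ≤ c * t := by
  obtain ⟨K', hline⟩ : ∃ K', LipschitzWith K' fun s : ℝ => g (x + s • v) :=
    ⟨_, hg.comp ((isometry_add_left x).lipschitz.comp
      (ContinuousLinearMap.toSpanSingleton ℝ v).lipschitz)⟩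
  simpa using (hline.lipschitzOnWith.absolutelyContinuousOnInterval).sub_le_mul_of_ae_deriv_le ht
    (h.mono fun s hs => by
      have hcurve : HasDerivAt (fun s : ℝ => x + s • v) v s := by
        simpa using ((hasDerivAt_id s).smul_const v).const_add x
      exact (hs.1.hasFDerivAt.comp_hasDerivAt s hcurve).deriv.trans_le hs.2)

theorem HasLineDerivAt.le_of_eventually_sub_le {f : E → ℝ} {f' c : ℝ} {x v : E}
    (hf : HasLineDerivAt ℝ f f' x v) (h : ∀ᶠ t in 𝓝[>] 0, f (x + t • v) - f x ≤ c * t) :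
    f' ≤ c := by
  refine le_of_tendsto hf.tendsto_slope_zero_right ?_
  filter_upwards [h, self_mem_nhdsWithin] with t ht (htpos : 0 < t)
  rw [smul_eq_mul, inv_mul_le_iff₀ htpos, mul_comm]
  exact ht

variable [MeasurableSpace E] [BorelSpace E]

theorem ae_ae_add_smul_mem {μ : Measure E} [SFinite μ] [μ.IsAddRightInvariant] {V : Set E}
    (hV : μ Vᶜ = 0) (v : E) : ∀ᵐ x ∂μ, ∀ᵐ s : ℝ, x + s • v ∈ V := by
  obtain ⟨N, hVN, hN, hN0⟩ := exists_measurable_superset_of_null hV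
  have hmeas : MeasurableSet {z : E × ℝ | z.1 + z.2 • v ∈ Nᶜ} :=
    hN.compl.preimage (by fun_prop : Continuous fun z : E × ℝ => z.1 + z.2 • v).measurable
  have hshift : ∀ s : ℝ, ∀ᵐ x ∂μ, x + s • v ∈ Nᶜ := fun s => by
    simpa [ae_iff, ← preimage_ofPred_eq] using (measure_preimage_add_right μ (s • v) N).trans hN0
  have hswap := (Measure.ae_ae_comm (μ := μ) (ν := volume)
    (p := fun x (s : ℝ) => x + s • v ∈ Nᶜ) hmeas).2 (.of_forall hshift)
  exact hswap.mono fun x hx => hx.mono fun s hs => compl_subset_comm.1 hVN hs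

end Lines

section LimitGradients

variable {E : Type*} [NormedAddCommGroup E] [InnerProductSpace ℝ E] [CompleteSpace E]

theorem norm_gradient_le_of_lipschitz {C : ℝ≥0} {g : E → ℝ} (hg : LipschitzWith C g) (x : E) :
    ‖gradient g x‖ ≤ C := by
  rw [gradient, LinearIsometryEquiv.norm_map]
  exact norm_fderiv_le_of_lipschitz ℝ hg

def limitGradients (F : ℕ → E → ℝ) (V : Set E) (q : E) : Set E :=
  {p | MapClusterPt p (atTop ×ˢ 𝓝[V] q) fun z : ℕ × E => gradient (F z.1) z.2}

variable {F : ℕ → E → ℝ} {V : Set E} {q : E}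

theorem isClosed_limitGradients : IsClosed (limitGradients F V q) :=
  isClosed_setOfPred_clusterPt

theorem limitGradients_subset_closedBall {C : ℝ≥0} (hF : ∀ k, LipschitzWith C (F k)) :
    limitGradients F V q ⊆ closedBall 0 C := fun _ hp =>
  isClosed_closedBall.mem_of_mapClusterPt hp
    (Eventually.of_forall fun z => by simpa using norm_gradient_le_of_lipschitz (hF z.1) z.2)

theorem exists_seq_of_mem_limitGradients {p : E} (hp : p ∈ limitGradients F V q) :
    ∃ κ : ℕ → ℕ, StrictMono κ ∧ ∃ x : ℕ → E, (∀ j, x j ∈ V) ∧ Tendsto x atTop (𝓝 q) ∧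
      Tendsto (fun j => gradient (F (κ j)) (x j)) atTop (𝓝 p) := by
  obtain ⟨ψ, hψp, hψ⟩ := MapClusterPt.exists_seq_tendsto hp
  obtain ⟨φ, hφ, hφψ⟩ := strictMono_subseq_of_tendsto_atTop (tendsto_fst.comp hψ)
  obtain ⟨hψq, hψV⟩ := tendsto_nhdsWithin_iff.1 ((tendsto_snd.comp hψ).comp hφ.tendsto_atTop)
  obtain ⟨N, hN⟩ := eventually_atTop.1 hψV
  have hshift : Tendsto (fun j => φ (j + N)) atTop atTop :=
    hφ.tendsto_atTop.comp (tendsto_add_atTop_nat N)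
  exact ⟨fun j => (ψ (φ (j + N))).1, fun a b hab => hφψ (Nat.add_lt_add_right hab N),
    fun j => (ψ (φ (j + N))).2, fun j => hN _ (Nat.le_add_left N j),
    hψq.comp (tendsto_add_atTop_nat N), hψp.comp hshift⟩

variable [FiniteDimensional ℝ E]

theorem isCompact_limitGradients {C : ℝ≥0} (hF : ∀ k, LipschitzWith C (F k)) :
    IsCompact (limitGradients F V q) :=
  (isCompact_closedBall 0 C).of_isClosed_subset isClosed_limitGradients
    (limitGradients_subset_closedBall hF)

theorem tendsto_nhdsSet_limitGradients {C : ℝ≥0} (hF : ∀ k, LipschitzWith C (F k)) :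
    Tendsto (fun z : ℕ × E => gradient (F z.1) z.2) (atTop ×ˢ 𝓝[V] q)
      (𝓝ˢ (limitGradients F V q)) :=
  (isCompact_closedBall 0 C).tendsto_nhdsSet_of_mapClusterPt
    (Eventually.of_forall fun z => by simpa using norm_gradient_le_of_lipschitz (hF z.1) z.2)
    fun _ _ hp => hp

end LimitGradients

section LimitOfLipschitz

variable {E : Type*} [NormedAddCommGroup E] [NormedSpace ℝ E] [MeasurableSpace E] [BorelSpace E]
  {μ : Measure E} [SFinite μ] [μ.IsAddRightInvariant] [μ.IsOpenPosMeasure]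
  {F : ℕ → E → ℝ} {f : E → ℝ} {C : ℝ≥0} {V : Set E}

theorem eventually_sub_le_of_eventually_fderiv_le (hF : ∀ k, LipschitzWith C (F k))
    (hFf : ∀ x, Tendsto (fun k => F k x) atTop (𝓝 (f x))) (hV : μ Vᶜ = 0)
    (hdiff : ∀ k, ∀ x ∈ V, DifferentiableAt ℝ (F k) x) {q v : E} {c : ℝ}
    (hc : ∀ᶠ z in atTop ×ˢ 𝓝[V] q, fderiv ℝ (F z.1) z.2 v ≤ c) :
    ∀ᶠ t in 𝓝[>] 0, f (q + t • v) - f q ≤ c * t := by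
  obtain ⟨m, δ, hδ, hmδ⟩ : ∃ m δ, 0 < δ ∧
      ∀ k ≥ m, ∀ x ∈ V, dist x q < δ → fderiv ℝ (F k) x v ≤ c := by
    obtain ⟨P, hP, Q, hQ, hPQ⟩ := eventually_prod_iff.1 hc
    obtain ⟨m, hm⟩ := eventually_atTop.1 hP
    obtain ⟨δ, hδ, hδQ⟩ := Metric.eventually_nhds_iff.1 (eventually_nhdsWithin_iff.1 hQ)
    exact ⟨m, δ, hδ, fun k hk x hx hxq => hPQ (hm k hk) (hδQ hxq hx)⟩
  have hf : Continuous f := (lipschitzWith_of_tendsto (.of_forall hF) hFf).continuous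
  have hgood : Dense {x | ∀ᵐ s : ℝ, x + s • v ∈ V} :=
    Measure.dense_of_ae (ae_ae_add_smul_mem (μ := μ) hV v)
  filter_upwards [Ioo_mem_nhdsGT (by positivity : 0 < δ / 2 / (‖v‖ + 1))] with t ht
  have hline : ∀ x ∈ ball q (δ / 2), (∀ᵐ s : ℝ, x + s • v ∈ V) →
      f (x + t • v) - f x ≤ c * t := by
    intro x hx hxV
    refine le_of_tendsto ((hFf _).sub (hFf _)) (eventually_atTop.2 ⟨m, fun k hk => ?_⟩)
    refine (hF k).sub_le_mul_of_ae_fderiv_le ht.1.le ?_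
    filter_upwards [ae_restrict_of_ae hxV, ae_restrict_mem measurableSet_Icc] with s hsV hs
    refine ⟨hdiff k _ hsV, hmδ k hk _ hsV ?_⟩
    have htv : t * ‖v‖ < δ / 2 := by
      have := (lt_div_iff₀ (by positivity)).1 ht.2
      nlinarith [norm_nonneg v, ht.1]
    calc dist (x + s • v) q ≤ dist (x + s • v) x + dist x q := dist_triangle _ _ _
      _ = s * ‖v‖ + dist x q := by
        rw [dist_self_add_left, norm_smul, Real.norm_of_nonneg hs.1]
      _ < δ := by nlinarith [mem_ball.1 hx, hs.2, norm_nonneg v]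
  have hclosed : IsClosed {x | f (x + t • v) - f x ≤ c * t} :=
    isClosed_le (by fun_prop) continuous_const
  exact hclosed.closure_subset_iff.2 (fun x hx => hline x hx.1 hx.2)
    (hgood.open_subset_closure_inter isOpen_ball (mem_ball_self (by positivity)))

end LimitOfLipschitz

section

variable {E : Type*} [NormedAddCommGroup E] [InnerProductSpace ℝ E] [FiniteDimensional ℝ E]
  [MeasurableSpace E] [BorelSpace E] {μ : Measure E} [μ.IsAddHaarMeasure]

theorem gradient_mem_convexHull_limitGradients {F : ℕ → E → ℝ} {f : E → ℝ} {C : ℝ≥0} {V : Set E}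
    (hF : ∀ k, LipschitzWith C (F k)) (hFf : ∀ x, Tendsto (fun k => F k x) atTop (𝓝 (f x)))
    (hV : μ Vᶜ = 0) (hdiff : ∀ k, ∀ x ∈ V, DifferentiableAt ℝ (F k) x) {q : E}
    (hq : DifferentiableAt ℝ f q) : gradient f q ∈ convexHull ℝ (limitGradients F V q) := by
  by_contra hζ
  obtain ⟨φ, c, hφK, hcζ⟩ := geometric_hahn_banach_closed_point (convex_convexHull ℝ _)
    (isCompact_convexHull (isCompact_limitGradients hF)).isClosed hζ
  set v := (InnerProductSpace.toDual ℝ E).symm φ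
  have hφ : ∀ p, inner ℝ v p = φ p := fun _ => InnerProductSpace.toDual_symm_apply
  have hc : ∀ᶠ z in atTop ×ˢ 𝓝[V] q, fderiv ℝ (F z.1) z.2 v ≤ c := by
    have hopen : IsOpen {p | φ p < c} := isOpen_lt φ.continuous continuous_const
    filter_upwards [tendsto_nhdsSet_limitGradients hF
      (hopen.mem_nhdsSet.2 fun p hp => hφK p (subset_convexHull ℝ _ hp))] with z hz
    rw [← inner_gradient_left, real_inner_comm, hφ]
    exact hz.le
  have := (hq.hasFDerivAt.hasLineDerivAt v).le_of_eventually_sub_le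
    (eventually_sub_le_of_eventually_fderiv_le (μ := μ) hF hFf hV hdiff hc)
  rw [← inner_gradient_left, real_inner_comm, hφ] at this
  exact this.not_gt hcζ

end

theorem generalized_graph_selector_of_limit_general (n : ℕ) (C : ℝ≥0)
    (L : Set (EuclideanSpace ℝ (Fin n) × EuclideanSpace ℝ (Fin n)))
    (h : EuclideanSpace ℝ (Fin n) × EuclideanSpace ℝ (Fin n) → ℝ)
    (Lk : ℕ → Set (EuclideanSpace ℝ (Fin n) × EuclideanSpace ℝ (Fin n)))
    (hk : ℕ → EuclideanSpace ℝ (Fin n) × EuclideanSpace ℝ (Fin n) → ℝ)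
    (fk : ℕ → EuclideanSpace ℝ (Fin n) → ℝ) (f : EuclideanSpace ℝ (Fin n) → ℝ)
    (hLip : ∀ k, LipschitzWith C (fk k))
    (hconv : TendstoUniformly fk f atTop)
    (V : Set (EuclideanSpace ℝ (Fin n))) (hV : volume Vᶜ = 0)
    (hVk : ∀ k, ∀ q ∈ V, DifferentiableAt ℝ (fk k) q ∧
      (q, gradient (fk k) q) ∈ Lk k ∧ fk k q = hk k (q, gradient (fk k) q))
    (hclosure : ∀ κ : ℕ → ℕ, StrictMono κ →
      ∀ x : ℕ → EuclideanSpace ℝ (Fin n) × EuclideanSpace ℝ (Fin n),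
        (∀ j, x j ∈ Lk (κ j)) →
        ∀ y, Tendsto x atTop (nhds y) →
          y ∈ L ∧ Tendsto (fun j => hk (κ j) (x j)) atTop (nhds (h y))) :
    LipschitzWith C f ∧
      ∀ q, DifferentiableAt ℝ f q →
        gradient f q ∈ convexHull ℝ {p | (q, p) ∈ L} ∧
          (gradient f q ∈ Set.extremePoints ℝ (convexHull ℝ {p | (q, p) ∈ L}) →
            f q = h (q, gradient f q)) := by
  have hLipf : LipschitzWith C f := lipschitzWith_of_tendsto (.of_forall hLip) hconv.tendsto_at
  refine ⟨hLipf, fun q hq => ?_⟩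
  have hlim : ∀ p ∈ limitGradients fk V q, (q, p) ∈ L ∧ f q = h (q, p) := by
    intro p hp
    obtain ⟨κ, hκ, x, hxV, hxq, hgrad⟩ := exists_seq_of_mem_limitGradients hp
    obtain ⟨hL, hh⟩ := hclosure κ hκ _ (fun j => (hVk _ _ (hxV j)).2.1) _ (hxq.prodMk_nhds hgrad)
    refine ⟨hL, tendsto_nhds_unique ?_ hh⟩
    simp only [← (hVk _ _ (hxV _)).2.2]
    exact TendstoUniformly.tendsto_comp (fun u hu => hκ.tendsto_atTop (hconv u hu))
      hLipf.continuous.continuousAt hxq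
  have hζ := gradient_mem_convexHull_limitGradients (μ := volume) hLip hconv.tendsto_at hV
    (fun k x hx => (hVk k x hx).1) hq
  have hsub : convexHull ℝ (limitGradients fk V q) ⊆ convexHull ℝ {p | (q, p) ∈ L} :=
    convexHull_mono fun p hp => (hlim p hp).1
  refine ⟨hsub hζ, fun hext => (hlim _ ?_).2⟩
  exact extremePoints_convexHull_subset
    (inter_extremePoints_subset_extremePoints_of_subset hsub ⟨hζ, hext⟩)

/-- (Analytic core of Theorem 5.2.) If `f_k` are `C`-Lipschitz graph
selectors for sets `L_k` with primitives `h_k` (on a full-measure set `V`), `f_k → f`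
uniformly, and the pairs `(L_k, h_k)` converge to `(L, h)` in the sense of the stated closure
property, then `f` is a `C`-Lipschitz generalized graph selector for `L` with primitive `h`:
at every point of differentiability `∇f(q)` lies in the fiberwise convex hull of `L`, and
`f(q) = h(q, ∇f(q))` whenever `∇f(q)` is extreme there. -/
theorem generalized_graph_selector_of_limit (n : ℕ) (C : ℝ≥0) (hC : 0 < C)
    (L : Set (EuclideanSpace ℝ (Fin n) × EuclideanSpace ℝ (Fin n)))
    (h : EuclideanSpace ℝ (Fin n) × EuclideanSpace ℝ (Fin n) → ℝ)
    (Lk : ℕ → Set (EuclideanSpace ℝ (Fin n) × EuclideanSpace ℝ (Fin n)))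
    (hk : ℕ → EuclideanSpace ℝ (Fin n) × EuclideanSpace ℝ (Fin n) → ℝ)
    (fk : ℕ → EuclideanSpace ℝ (Fin n) → ℝ) (f : EuclideanSpace ℝ (Fin n) → ℝ)
    (hLip : ∀ k, LipschitzWith C (fk k))
    (hconv : TendstoUniformly fk f atTop)
    (V : Set (EuclideanSpace ℝ (Fin n))) (hV : volume Vᶜ = 0)
    (hVk : ∀ k, ∀ q ∈ V, DifferentiableAt ℝ (fk k) q ∧
      (q, gradient (fk k) q) ∈ Lk k ∧ fk k q = hk k (q, gradient (fk k) q))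
    (hclosure : ∀ κ : ℕ → ℕ, StrictMono κ →
      ∀ x : ℕ → EuclideanSpace ℝ (Fin n) × EuclideanSpace ℝ (Fin n),
        (∀ j, x j ∈ Lk (κ j)) →
        ∀ y, Tendsto x atTop (nhds y) →
          y ∈ L ∧ Tendsto (fun j => hk (κ j) (x j)) atTop (nhds (h y))) :
    LipschitzWith C f ∧
      ∀ q, DifferentiableAt ℝ f q →
        gradient f q ∈ convexHull ℝ {p | (q, p) ∈ L} ∧
          (gradient f q ∈ Set.extremePoints ℝ (convexHull ℝ {p | (q, p) ∈ L}) →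
            f q = h (q, gradient f q)) :=
  generalized_graph_selector_of_limit_general n C L h Lk hk fk f hLip hconv V hV hVk hclosure
end
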